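/- arXiv:2309.00577 — 3 statements merged into one kernel-verified Lean document; each statement's English description precedes it below -/
import Mathlib

section
/- Let G be a group equipped with a bi-invariant metric d. Two elements g, h ∈ G are non-adjacent (i.e. there exists k ∈ G with k ≠ g, k ≠ h, and d(g,h) = d(g,k) + d(k,h)) if and only if there exist factorizations g = g₀g₁ and h = h₀h₁ such that g₀ ≠ h₀, g₁ ≠ h₁, and d(g,h) = d(g₀,h₀) + d(g₁,h₁). -/
/-! The two notions are exchanged by translation. A point `k` between `g` and `h` gives the
factorizations `g = (g * k⁻¹) * k` and `h = 1 * h`, and right invariance turns `d (g * k⁻¹) 1`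
into `d g k`. Conversely, from `g = g₀ * g₁` and `h = h₀ * h₁` the point `k = h₀ * g₁` lies
between them, since `d g k = d g₀ h₀` by right invariance and `d k h = d g₁ h₁` by left
invariance. -/

section BiInvariant

variable {G : Type*} [Group G] {d : G → G → ℝ}

theorem exists_factorization_of_between
    (h_right : ∀ g x y : G, d (x * g) (y * g) = d x y) {g h k : G}
    (hkg : k ≠ g) (hkh : k ≠ h) (hd : d g h = d g k + d k h) :
    ∃ g₀ g₁ h₀ h₁ : G, g = g₀ * g₁ ∧ h = h₀ * h₁ ∧ g₀ ≠ h₀ ∧ g₁ ≠ h₁ ∧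
      d g h = d g₀ h₀ + d g₁ h₁ := by
  refine ⟨g * k⁻¹, k, 1, h, by group, by group, ?_, hkh, ?_⟩
  · rwa [Ne, mul_inv_eq_one, eq_comm]
  · rw [← h_right k (g * k⁻¹), inv_mul_cancel_right, one_mul, hd]

theorem exists_between_of_factorization
    (h_left : ∀ g x y : G, d (g * x) (g * y) = d x y)
    (h_right : ∀ g x y : G, d (x * g) (y * g) = d x y) {g₀ g₁ h₀ h₁ : G}
    (h₀_ne : g₀ ≠ h₀) (h₁_ne : g₁ ≠ h₁) (hd : d (g₀ * g₁) (h₀ * h₁) = d g₀ h₀ + d g₁ h₁) :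
    ∃ k : G, k ≠ g₀ * g₁ ∧ k ≠ h₀ * h₁ ∧
      d (g₀ * g₁) (h₀ * h₁) = d (g₀ * g₁) k + d k (h₀ * h₁) :=
  ⟨h₀ * g₁, mt mul_right_cancel h₀_ne.symm, mt mul_left_cancel h₁_ne, by rw [h_right, h_left, hd]⟩

end BiInvariant

theorem stmt4_general {G : Type*} [Group G] (d : G → G → ℝ)
    (h_left : ∀ g x y : G, d (g * x) (g * y) = d x y)
    (h_right : ∀ g x y : G, d (x * g) (y * g) = d x y)
    (g h : G) :
    (∃ k : G, k ≠ g ∧ k ≠ h ∧ d g h = d g k + d k h) ↔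
      (∃ g₀ g₁ h₀ h₁ : G, g = g₀ * g₁ ∧ h = h₀ * h₁ ∧ g₀ ≠ h₀ ∧ g₁ ≠ h₁ ∧
        d g h = d g₀ h₀ + d g₁ h₁) := by
  constructor
  · rintro ⟨k, hkg, hkh, hd⟩
    exact exists_factorization_of_between h_right hkg hkh hd
  · rintro ⟨g₀, g₁, h₀, h₁, rfl, rfl, h₀_ne, h₁_ne, hd⟩
    exact exists_between_of_factorization h_left h_right h₀_ne h₁_ne hd

/-- In a group with a bi-invariant metric, `g` and `h` are non-adjacent iff
they factor as `g = g₀ * g₁`, `h = h₀ * h₁` with `g₀ ≠ h₀`, `g₁ ≠ h₁` and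
`d g h = d g₀ h₀ + d g₁ h₁`. -/
theorem stmt4 {G : Type*} [Group G] (d : G → G → ℝ)
    (h_self : ∀ x, d x x = 0)
    (h_sep : ∀ x y : G, d x y = 0 → x = y)
    (h_symm : ∀ x y : G, d x y = d y x)
    (h_tri : ∀ x y z : G, d x z ≤ d x y + d y z)
    (h_left : ∀ g x y : G, d (g * x) (g * y) = d x y)
    (h_right : ∀ g x y : G, d (x * g) (y * g) = d x y)
    (g h : G) :
    (∃ k : G, k ≠ g ∧ k ≠ h ∧ d g h = d g k + d k h) ↔
      (∃ g₀ g₁ h₀ h₁ : G, g = g₀ * g₁ ∧ h = h₀ * h₁ ∧ g₀ ≠ h₀ ∧ g₁ ≠ h₁ ∧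
        d g h = d g₀ h₀ + d g₁ h₁) :=
  stmt4_general d h_left h_right g h
end

section
/- Let G be a group with a conjugation-invariant norm and associated bi-invariant metric d. Let A be the free abelian group on the set of ordered pairs (g,h) of adjacent distinct elements of G with d(g,h) = ℓ, for a fixed ℓ > 0. Define φ(g,h) = gh⁻¹. Then φ induces a bijection between: equivalence classes of such pairs under the relations (g₀,h₀) ∼ (g₀k, h₀k) and (g₁,h₁) ∼ (kg₁, kh₁) for k ∈ G, and conjugacy classes of indecomposable elements of norm ℓ in G. -/
/-! Right translation is an isometry of the bi-invariant metric, so `(g, h)` is an adjacent pair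
at distance `ℓ` exactly when `(g h⁻¹, 1)` is one. For a pair `(x, 1)`, adjacency says that the
triangle inequality `|x| ≤ |k⁻¹ x| + |k|` is never an equality for `k ∉ {1, x}`, i.e. that `x` is
indecomposable. Hence `(g, h) ↦ g h⁻¹` and `x ↦ (x, 1)` are mutually inverse up to the two
relations: right translation fixes `g h⁻¹`, and left translation by `k` conjugates it by `k`. -/

theorem Quot.exists_bijective_of_inverse {α β : Sort*} {r : α → α → Prop} {s : β → β → Prop}
    (f : α → β) (g : β → α)
    (hf : ∀ a a', r a a' → Quot.mk s (f a) = Quot.mk s (f a'))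
    (hg : ∀ b b', s b b' → Quot.mk r (g b) = Quot.mk r (g b'))
    (hgf : ∀ a, Quot.mk r (g (f a)) = Quot.mk r a)
    (hfg : ∀ b, Quot.mk s (f (g b)) = Quot.mk s b) :
    ∃ Φ : Quot r → Quot s, Function.Bijective Φ ∧ ∀ a, Φ (Quot.mk r a) = Quot.mk s (f a) :=
  ⟨Quot.lift _ hf,
    Function.bijective_iff_has_inverse.2 ⟨Quot.lift _ hg, Quot.ind hgf, Quot.ind hfg⟩,
    fun _ => rfl⟩

section Adjacent

variable {X : Type*} (d : X → X → ℝ)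

def IsAdjacent (x y : X) : Prop :=
  ¬ ∃ z, z ≠ x ∧ z ≠ y ∧ d x y = d x z + d z y

variable {d}

theorem isAdjacent_equiv_iff (e : X ≃ X) (he : ∀ x y, d (e x) (e y) = d x y) {x y : X} :
    IsAdjacent d (e x) (e y) ↔ IsAdjacent d x y :=
  not_congr (e.exists_congr fun z => by simp only [ne_eq, e.injective.eq_iff, he]).symm

end Adjacent

section ConjInvariantNorm

variable {G : Type*} [Group G] (N : G → ℝ)

def normDist (x y : G) : ℝ := N (y⁻¹ * x)

def IsIndecomposable (x : G) : Prop :=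
  x ≠ 1 ∧ ∀ k, k ≠ 1 → k ≠ x → N x < N (k⁻¹ * x) + N k

variable {N}

theorem normDist_mul_right (h_conj : ∀ g h : G, N (g * h * g⁻¹) = N h) (g h k : G) :
    normDist N (g * k) (h * k) = normDist N g h := by
  rw [normDist, normDist, ← h_conj k⁻¹ (h⁻¹ * g)]
  congr 1
  group

theorem isAdjacent_one_iff (h_mul : ∀ g h : G, N (g * h) ≤ N g + N h) {x : G} (hx : x ≠ 1) :
    IsAdjacent (normDist N) x 1 ↔ IsIndecomposable N x := by
  have triangle : ∀ k, N x ≤ N (k⁻¹ * x) + N k := fun k => by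
    simpa [add_comm] using h_mul k (k⁻¹ * x)
  simp only [IsAdjacent, IsIndecomposable, normDist, inv_one, one_mul, not_exists, not_and]
  exact ⟨fun h => ⟨hx, fun k hk1 hkx => (triangle k).lt_of_ne (h k hkx hk1)⟩,
    fun h k hkx hk1 => (h.2 k hk1 hkx).ne⟩

theorem isAdjPair_iff (h_mul : ∀ g h : G, N (g * h) ≤ N g + N h)
    (h_conj : ∀ g h : G, N (g * h * g⁻¹) = N h) {ℓ : ℝ} {g h : G} :
    (g ≠ h ∧ IsAdjacent (normDist N) g h ∧ normDist N g h = ℓ) ↔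
      IsIndecomposable N (g * h⁻¹) ∧ N (g * h⁻¹) = ℓ := by
  have hdist : normDist N g h = N (g * h⁻¹) := by
    rw [← normDist_mul_right h_conj g h h⁻¹, mul_inv_cancel, normDist, inv_one, one_mul]
  have hadj_iff : IsAdjacent (normDist N) g h ↔ IsAdjacent (normDist N) (g * h⁻¹) 1 := by
    rw [← mul_inv_cancel h]
    exact (isAdjacent_equiv_iff (Equiv.mulRight h⁻¹) fun x y => normDist_mul_right h_conj x y _).symm
  rw [hadj_iff, hdist]
  constructor
  · rintro ⟨hne, hadj, rfl⟩
    exact ⟨(isAdjacent_one_iff h_mul (mul_inv_eq_one.not.2 hne)).1 hadj, rfl⟩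
  · rintro ⟨hind, rfl⟩
    exact ⟨mul_inv_eq_one.not.1 hind.1, (isAdjacent_one_iff h_mul hind.1).2 hind, rfl⟩

end ConjInvariantNorm

theorem stmt17_general {G : Type*} [Group G] (N : G → ℝ)
    (h_mul : ∀ g h : G, N (g * h) ≤ N g + N h)
    (h_conj : ∀ g h : G, N (g * h * g⁻¹) = N h)
    (ℓ : ℝ) :
    let d : G → G → ℝ := fun x y => N (y⁻¹ * x)
    let Adjacent : G → G → Prop :=
      fun x y => ¬ ∃ z : G, z ≠ x ∧ z ≠ y ∧ d x y = d x z + d z y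
    let Indec : G → Prop :=
      fun x => x ≠ 1 ∧ ∀ k : G, k ≠ 1 → k ≠ x → N x < N (k⁻¹ * x) + N k
    ∀ (R1 : {p : G × G // p.1 ≠ p.2 ∧ Adjacent p.1 p.2 ∧ d p.1 p.2 = ℓ} →
            {p : G × G // p.1 ≠ p.2 ∧ Adjacent p.1 p.2 ∧ d p.1 p.2 = ℓ} → Prop)
      (R2 : {x : G // Indec x ∧ N x = ℓ} → {x : G // Indec x ∧ N x = ℓ} → Prop),
      (∀ p q, R1 p q ↔ ((∃ k : G, q.val = (p.val.1 * k, p.val.2 * k)) ∨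
          (∃ k : G, q.val = (k * p.val.1, k * p.val.2)))) →
      (∀ a b, R2 a b ↔ ∃ k : G, b.val = k * a.val * k⁻¹) →
      ∃ Φ : Quot R1 → Quot R2, Function.Bijective Φ ∧
        ∀ p q, p.val.1 * p.val.2⁻¹ = q.val → Φ (Quot.mk R1 p) = Quot.mk R2 q := by
  intro d Adjacent Indec R1 R2 hR1 hR2
  have mk_pair (g h : G) (hgh : Indec (g * h⁻¹) ∧ N (g * h⁻¹) = ℓ) :
      g ≠ h ∧ Adjacent g h ∧ d g h = ℓ :=
    (isAdjPair_iff h_mul h_conj).2 hgh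
  refine (Quot.exists_bijective_of_inverse (r := R1) (s := R2)
    (fun p => ⟨p.1.1 * p.1.2⁻¹, (isAdjPair_iff h_mul h_conj).1 p.2⟩)
    (fun x => ⟨(x.1, 1), mk_pair _ _ (by simpa using x.2)⟩) ?_ ?_ ?_ ?_).imp
    fun Φ ⟨hΦ, hΦ_mk⟩ => ⟨hΦ, fun p q hpq => (hΦ_mk p).trans (congrArg _ (Subtype.ext hpq))⟩
  · intro p q hpq
    rcases (hR1 p q).1 hpq with ⟨k, hk⟩ | ⟨k, hk⟩
    · exact congrArg _ (Subtype.ext (by simp [hk]))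
    · exact Quot.sound ((hR2 _ _).2 ⟨k, by simp only [hk]; group⟩)
  · intro a b hab
    obtain ⟨k, hk⟩ := (hR2 a b).1 hab
    -- `(k a, k)` is a left translate of `(a, 1)` and a right translate of `(k a k⁻¹, 1)`.
    let c : {p : G × G // p.1 ≠ p.2 ∧ Adjacent p.1 p.2 ∧ d p.1 p.2 = ℓ} :=
      ⟨(k * a.1, k), mk_pair _ _ (by simpa [← mul_assoc, ← hk] using b.2)⟩
    calc Quot.mk R1 _ = Quot.mk R1 c := Quot.sound ((hR1 _ _).2 (.inr ⟨k, by simp [c]⟩))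
      _ = Quot.mk R1 _ := Quot.sound ((hR1 _ _).2 (.inl ⟨k⁻¹, by simp [c, hk]⟩))
  · exact fun p => Quot.sound ((hR1 _ _).2 (.inl ⟨p.1.2, by simp⟩))
  · exact fun x => congrArg _ (Subtype.ext (by simp))

/-- For a group `G` with a conjugation-invariant norm and associated bi-invariant metric
`d g h = |h⁻¹g|`, and `ℓ > 0`: the map `φ(g,h) = g h⁻¹` induces a bijection between
equivalence classes of adjacent pairs at distance `ℓ` (under simultaneous right- and
left-translation) and conjugacy classes of indecomposable elements of norm `ℓ`. -/
theorem stmt17 {G : Type*} [Group G] (N : G → ℝ)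
    (h_one : N 1 = 0)
    (h_pos : ∀ g : G, g ≠ 1 → 0 < N g)
    (h_mul : ∀ g h : G, N (g * h) ≤ N g + N h)
    (h_conj : ∀ g h : G, N (g * h * g⁻¹) = N h)
    (ℓ : ℝ) (hℓ : 0 < ℓ) :
    let d : G → G → ℝ := fun x y => N (y⁻¹ * x)
    let Adjacent : G → G → Prop :=
      fun x y => ¬ ∃ z : G, z ≠ x ∧ z ≠ y ∧ d x y = d x z + d z y
    let Indec : G → Prop :=
      fun x => x ≠ 1 ∧ ∀ k : G, k ≠ 1 → k ≠ x → N x < N (k⁻¹ * x) + N k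
    ∀ (R1 : {p : G × G // p.1 ≠ p.2 ∧ Adjacent p.1 p.2 ∧ d p.1 p.2 = ℓ} →
            {p : G × G // p.1 ≠ p.2 ∧ Adjacent p.1 p.2 ∧ d p.1 p.2 = ℓ} → Prop)
      (R2 : {x : G // Indec x ∧ N x = ℓ} → {x : G // Indec x ∧ N x = ℓ} → Prop),
      (∀ p q, R1 p q ↔ ((∃ k : G, q.val = (p.val.1 * k, p.val.2 * k)) ∨
          (∃ k : G, q.val = (k * p.val.1, k * p.val.2)))) →
      (∀ a b, R2 a b ↔ ∃ k : G, b.val = k * a.val * k⁻¹) →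
      ∃ Φ : Quot R1 → Quot R2, Function.Bijective Φ ∧
        ∀ p q, p.val.1 * p.val.2⁻¹ = q.val → Φ (Quot.mk R1 p) = Quot.mk R2 q :=
  stmt17_general N h_mul h_conj ℓ
end

section
/- Let X be a metric space (d separated, possibly non-symmetric, values in [0,∞]). For ℓ > 0, the first magnitude homology group MH_1^ℓ(X) of the magnitude chain complex — where MC_n^ℓ(X) is the free abelian group on tuples (x₀,…,xₙ) with consecutive entries distinct and total length Σ d(xᵢ,xᵢ₊₁) = ℓ, with boundary ∂ = Σᵢ₌₁ⁿ⁻¹ (−1)ⁱ δᵢ where δᵢ deletes xᵢ if it is between its neighbours and is 0 otherwise — is the free abelian group on ordered pairs (x,y) of distinct adjacent points with d(x,y) = ℓ. -/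
/-! Since `∂₂ (x, z, y)` is `-(x, y)` when `z` lies between `x` and `y` and `0` otherwise, the image
of `∂₂` is spanned exactly by the generators `(x, y)` that admit a point strictly between them.
Quotienting the free group on all pairs by the free group on these non-adjacent pairs leaves the
free group on the adjacent ones. -/

open scoped ENNReal

/-- Index set of magnitude 1-chains in grading `ℓ`: pairs of distinct points with
`d x y = ℓ`. -/
def MagT1 {X : Type*} (d : X → X → ℝ≥0∞) (ℓ : ℝ≥0∞) : Type _ :=
  {p : X × X // p.1 ≠ p.2 ∧ d p.1 p.2 = ℓ}

/-- Index set of magnitude 2-chains in grading `ℓ`: triples with consecutive entries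
distinct and total length `ℓ`. -/
def MagT2 {X : Type*} (d : X → X → ℝ≥0∞) (ℓ : ℝ≥0∞) : Type _ :=
  {t : X × X × X // t.1 ≠ t.2.1 ∧ t.2.1 ≠ t.2.2 ∧ d t.1 t.2.1 + d t.2.1 t.2.2 = ℓ}

/-- The value of the magnitude boundary `∂₂ = -δ₁` on a generating triple `(x,y,z)`:
`-(x,z)` if `y` is between `x` and `z`, and `0` otherwise. -/
noncomputable def magDelta1Gen {X : Type*} (d : X → X → ℝ≥0∞)
    (h_self : ∀ x, d x x = 0) (h_sep : ∀ x y : X, d x y = 0 → x = y)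
    (ℓ : ℝ≥0∞) (t : MagT2 d ℓ) : MagT1 d ℓ →₀ ℤ :=
  if hb : d t.val.1 t.val.2.2 = d t.val.1 t.val.2.1 + d t.val.2.1 t.val.2.2 then
    Finsupp.single ⟨(t.val.1, t.val.2.2), by
      constructor
      · intro h
        have h0 : d t.val.1 t.val.2.2 = 0 := by rw [h]; exact h_self _
        rw [h0] at hb
        exact t.prop.1 (h_sep _ _ (add_eq_zero.mp hb.symm).1)
      · rw [hb]; exact t.prop.2.2⟩ (-1)
  else 0

/-- The magnitude boundary map `∂₂ : MC₂^ℓ → MC₁^ℓ` on free abelian groups. -/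
noncomputable def magBoundary2 {X : Type*} (d : X → X → ℝ≥0∞)
    (h_self : ∀ x, d x x = 0) (h_sep : ∀ x y : X, d x y = 0 → x = y)
    (ℓ : ℝ≥0∞) : (MagT2 d ℓ →₀ ℤ) →ₗ[ℤ] (MagT1 d ℓ →₀ ℤ) :=
  Finsupp.lift (MagT1 d ℓ →₀ ℤ) ℤ (MagT2 d ℓ) (magDelta1Gen d h_self h_sep ℓ)

namespace Finsupp

variable {α M R : Type*} [Ring R] [AddCommGroup M] [Module R M]

theorem isCompl_supported_compl (s : Set α) :
    IsCompl (supported M R s) (supported M R sᶜ) :=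
  ⟨disjoint_supported_supported isCompl_compl.disjoint,
    codisjoint_supported_supported isCompl_compl.codisjoint⟩

noncomputable def quotientSupportedEquiv (s : Set α) :
    ((α →₀ M) ⧸ supported M R s) ≃ₗ[R] (↥sᶜ →₀ M) :=
  (Submodule.quotientEquivOfIsCompl _ _ (isCompl_supported_compl s)).trans
    (supportedEquivFinsupp sᶜ)

end Finsupp

section Magnitude

variable {X : Type*} (d : X → X → ℝ≥0∞) (h_self : ∀ x, d x x = 0)
  (h_sep : ∀ x y : X, d x y = 0 → x = y) (ℓ : ℝ≥0∞)

def nonAdjacentMagT1 : Set (MagT1 d ℓ) :=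
  {q | ∃ z : X, z ≠ q.val.1 ∧ z ≠ q.val.2 ∧ d q.val.1 q.val.2 = d q.val.1 z + d z q.val.2}

theorem magDelta1Gen_mem_supported_nonAdjacent (t : MagT2 d ℓ) :
    magDelta1Gen d h_self h_sep ℓ t ∈ Finsupp.supported ℤ ℤ (nonAdjacentMagT1 d ℓ) := by
  unfold magDelta1Gen
  split_ifs with hbetween
  · exact Finsupp.single_mem_supported ℤ _
      ⟨t.val.2.1, t.prop.1.symm, t.prop.2.1, hbetween⟩
  · exact zero_mem _

theorem single_mem_range_magBoundary2 {q : MagT1 d ℓ} (hq : q ∈ nonAdjacentMagT1 d ℓ) (c : ℤ) :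
    Finsupp.single q c ∈ LinearMap.range (magBoundary2 d h_self h_sep ℓ) := by
  obtain ⟨z, hz₁, hz₂, hbetween⟩ := hq
  let t : MagT2 d ℓ := ⟨(q.val.1, z, q.val.2), hz₁.symm, hz₂, hbetween ▸ q.prop.2⟩
  have hgen : magDelta1Gen d h_self h_sep ℓ t = Finsupp.single q (-1) := dif_pos hbetween
  have hboundary : magBoundary2 d h_self h_sep ℓ (Finsupp.single t (-c)) =
      Finsupp.single q c := by
    rw [magBoundary2, Finsupp.lift_apply, Finsupp.sum_single_index (by rw [zero_smul]), hgen,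
      Finsupp.smul_single, smul_eq_mul, neg_mul_neg, mul_one]
  exact ⟨_, hboundary⟩

theorem range_magBoundary2 :
    LinearMap.range (magBoundary2 d h_self h_sep ℓ) =
      Finsupp.supported ℤ ℤ (nonAdjacentMagT1 d ℓ) := by
  apply le_antisymm
  · rintro _ ⟨f, rfl⟩
    rw [magBoundary2, Finsupp.lift_apply]
    exact Submodule.finsuppSum_mem _ _ _ _ fun t _ =>
      Submodule.smul_mem _ _ (magDelta1Gen_mem_supported_nonAdjacent d h_self h_sep ℓ t)
  · rw [Finsupp.supported_eq_span_single, Submodule.span_le]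
    rintro _ ⟨q, hq, rfl⟩
    exact single_mem_range_magBoundary2 d h_self h_sep ℓ hq 1

def adjacentMagT1Equiv :
    ↥(nonAdjacentMagT1 d ℓ)ᶜ ≃ {p : X × X // p.1 ≠ p.2 ∧ d p.1 p.2 = ℓ ∧
      ¬ ∃ z : X, z ≠ p.1 ∧ z ≠ p.2 ∧ d p.1 p.2 = d p.1 z + d z p.2} where
  toFun q := ⟨q.val.val, q.val.prop.1, q.val.prop.2, q.prop⟩
  invFun p := ⟨⟨p.val, p.prop.1, p.prop.2.1⟩, p.prop.2.2⟩
  left_inv _ := rfl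
  right_inv _ := rfl

end Magnitude

theorem stmt19_general {X : Type*} (d : X → X → ℝ≥0∞)
    (h_self : ∀ x, d x x = 0)
    (h_sep : ∀ x y : X, d x y = 0 → x = y)
    (ℓ : ℝ≥0∞) :
    Nonempty (((MagT1 d ℓ →₀ ℤ) ⧸ LinearMap.range (magBoundary2 d h_self h_sep ℓ)) ≃ₗ[ℤ]
      ({p : X × X // p.1 ≠ p.2 ∧ d p.1 p.2 = ℓ ∧
        ¬ ∃ z : X, z ≠ p.1 ∧ z ≠ p.2 ∧ d p.1 p.2 = d p.1 z + d z p.2} →₀ ℤ)) :=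
  ⟨(Submodule.quotEquivOfEq _ _ (range_magBoundary2 d h_self h_sep ℓ)).trans <|
    (Finsupp.quotientSupportedEquiv _).trans (Finsupp.domLCongr (adjacentMagT1Equiv d ℓ))⟩

/-- Leinster–Shulman: for a (possibly non-symmetric) metric space `X` and `ℓ > 0`,
the first magnitude homology `MH₁^ℓ(X) = MC₁^ℓ / im ∂₂` (note `∂₁ = 0`) is the free
abelian group on ordered pairs of distinct *adjacent* points at distance `ℓ`. -/
theorem stmt19 {X : Type*} (d : X → X → ℝ≥0∞)
    (h_self : ∀ x, d x x = 0)
    (h_sep : ∀ x y : X, d x y = 0 → x = y)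
    (h_tri : ∀ x y z : X, d x z ≤ d x y + d y z)
    (ℓ : ℝ≥0∞) (hℓ0 : 0 < ℓ) (hℓtop : ℓ ≠ ⊤) :
    Nonempty (((MagT1 d ℓ →₀ ℤ) ⧸ LinearMap.range (magBoundary2 d h_self h_sep ℓ)) ≃ₗ[ℤ]
      ({p : X × X // p.1 ≠ p.2 ∧ d p.1 p.2 = ℓ ∧
        ¬ ∃ z : X, z ≠ p.1 ∧ z ≠ p.2 ∧ d p.1 p.2 = d p.1 z + d z p.2} →₀ ℤ)) :=
  stmt19_general d h_self h_sep ℓ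
end
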